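/- arXiv:1708.07165 — 3 statements merged into one kernel-verified Lean document; each statement's English description precedes it below -/
import Mathlib

section
/- Let T > 0 and let E ⊂ (0,T) be a measurable set of positive Lebesgue measure, and let l ∈ (0,T) be a Lebesgue density point of E. Then for each μ > 1 there exists l₁ ∈ (l, T) such that the sequence {l_m}_{m≥1} defined by l_m = l + μ^{−(m−1)}(l₁ − l) (equivalently l_{m+1} = l + μ^{−m}(l₁ − l)) satisfies |E ∩ (l_{m+1}, l_m)| ≥ (1/3)(l_m − l_{m+1}) for every m ≥ 1. -/
open MeasureTheory Filter
open scoped ENNReal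

theorem stmt_1 (T : ℝ) (hT : 0 < T) (E : Set ℝ) (hE : MeasurableSet E)
    (hEsub : E ⊆ Set.Ioo 0 T) (hEpos : 0 < volume E)
    (l : ℝ) (hl : l ∈ Set.Ioo 0 T)
    (hdens : Tendsto
      (fun r : ℝ => volume (E ∩ Set.Ioo (l - r) (l + r)) / ENNReal.ofReal (2 * r))
      (nhdsWithin 0 (Set.Ioi 0)) (nhds 1)) :
    ∀ μ : ℝ, 1 < μ →
      ∃ l₁ : ℝ, l < l₁ ∧ l₁ < T ∧
        ∀ m : ℕ, 1 ≤ m →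
          ENNReal.ofReal
              ((1 / 3) * ((l + (l₁ - l) / μ ^ (m - 1)) - (l + (l₁ - l) / μ ^ m)))
            ≤ volume (E ∩ Set.Ioo (l + (l₁ - l) / μ ^ m) (l + (l₁ - l) / μ ^ (m - 1))) := by
  intro μ hμ
  have hμ0 : (0:ℝ) < μ := lt_trans one_pos hμ
  have hinv : 1/μ < 1 := by rw [div_lt_one hμ0]; linarith
  have hinvpos : (0:ℝ) < 1/μ := by positivity
  set ε : ℝ := (1 - 1/μ)/3 with hεdef
  have hεpos : 0 < ε := by rw [hεdef]; linarith
  have hε1 : ε < 1 := by rw [hεdef]; linarith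
  have h1 : (1 : ℝ≥0∞) - ENNReal.ofReal ε < 1 :=
    ENNReal.sub_lt_self ENNReal.one_ne_top one_ne_zero
      (by simp [ENNReal.ofReal_eq_zero]; linarith)
  have hev := hdens.eventually (eventually_gt_nhds h1)
  rw [eventually_nhdsWithin_iff, Metric.eventually_nhds_iff] at hev
  obtain ⟨δ₀, hδ₀pos, hP⟩ := hev
  have hlT : l < T := hl.2
  set δ : ℝ := min (δ₀/2) ((T - l)/2) with hδdef
  have hδpos : 0 < δ := lt_min (by linarith) (by linarith)
  have hδlt : δ < δ₀ := lt_of_le_of_lt (min_le_left _ _) (by linarith)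
  have hδT : l + δ < T := by
    have h := min_le_right (δ₀/2) ((T-l)/2)
    rw [← hδdef] at h; linarith
  refine ⟨l + δ, by linarith, hδT, ?_⟩
  have key : ∀ r : ℝ, 0 < r → r ≤ δ →
      ENNReal.ofReal ((1-ε)*(2*r)) ≤ volume (E ∩ Set.Ioo (l - r) (l + r)) := by
    intro r hr hrδ
    have hd : dist r 0 < δ₀ := by
      rw [Real.dist_eq, sub_zero, abs_of_pos hr]; linarith
    have hthis := hP hd (Set.mem_Ioi.mpr hr)
    have h2r : ENNReal.ofReal (2*r) ≠ 0 := by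
      simp [ENNReal.ofReal_eq_zero]; linarith
    have h2rt : ENNReal.ofReal (2*r) ≠ ⊤ := ENNReal.ofReal_ne_top
    have hle : (1 - ENNReal.ofReal ε) * ENNReal.ofReal (2*r)
        ≤ volume (E ∩ Set.Ioo (l - r) (l + r)) := by
      rw [← ENNReal.le_div_iff_mul_le (Or.inl h2r) (Or.inl h2rt)]
      exact hthis.le
    calc ENNReal.ofReal ((1-ε)*(2*r))
        = ENNReal.ofReal (1-ε) * ENNReal.ofReal (2*r) :=
          ENNReal.ofReal_mul (by linarith)
      _ = (1 - ENNReal.ofReal ε) * ENNReal.ofReal (2*r) := by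
          rw [ENNReal.ofReal_sub _ hεpos.le, ENNReal.ofReal_one]
      _ ≤ _ := hle
  intro m hm
  obtain ⟨k, rfl⟩ := Nat.exists_eq_add_of_le' hm
  have hμk : (0:ℝ) < μ ^ k := pow_pos hμ0 k
  have hμk1 : (1:ℝ) ≤ μ ^ k := one_le_pow₀ hμ.le
  set a : ℝ := δ / μ ^ k with hadef
  set b : ℝ := δ / μ ^ (k+1) with hbdef
  have hapos : 0 < a := div_pos hδpos hμk
  have haδ : a ≤ δ := by
    rw [hadef, div_le_iff₀ hμk]; nlinarith
  have hba : b = a / μ := by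
    rw [hbdef, hadef, pow_succ, ← div_div]
  have hbpos : 0 < b := div_pos hδpos (pow_pos hμ0 _)
  have hblt : b < a := by rw [hba]; exact div_lt_self hapos hμ
  have hsub : E ∩ Set.Ioo (l - a) (l + a)
      ⊆ (E ∩ Set.Ioo (l + b) (l + a)) ∪ Set.Ioc (l - a) (l + b) := by
    rintro x ⟨hxE, hx1, hx2⟩
    rcases le_or_gt x (l + b) with h | h
    · exact Or.inr ⟨hx1, h⟩
    · exact Or.inl ⟨hxE, h, hx2⟩
  have hmeas : volume (E ∩ Set.Ioo (l - a) (l + a))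
      ≤ volume (E ∩ Set.Ioo (l + b) (l + a)) + ENNReal.ofReal (a + b) := by
    calc volume (E ∩ Set.Ioo (l-a) (l+a))
        ≤ volume ((E ∩ Set.Ioo (l+b) (l+a)) ∪ Set.Ioc (l-a) (l+b)) :=
          measure_mono hsub
      _ ≤ volume (E ∩ Set.Ioo (l+b) (l+a)) + volume (Set.Ioc (l-a) (l+b)) :=
          measure_union_le _ _
      _ = volume (E ∩ Set.Ioo (l+b) (l+a)) + ENNReal.ofReal (a + b) := by
          rw [Real.volume_Ioc]; congr 1; ring
  have heq : (1/3:ℝ)*(a-b) + (a+b) = (1-ε)*(2*a) := by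
    rw [hba, hεdef]; field_simp; ring
  have hsum : ENNReal.ofReal ((1/3)*(a-b)) + ENNReal.ofReal (a+b)
      ≤ volume (E ∩ Set.Ioo (l+b) (l+a)) + ENNReal.ofReal (a+b) := by
    calc ENNReal.ofReal ((1/3)*(a-b)) + ENNReal.ofReal (a+b)
        = ENNReal.ofReal ((1/3)*(a-b) + (a+b)) :=
          (ENNReal.ofReal_add (by nlinarith) (by nlinarith)).symm
      _ = ENNReal.ofReal ((1-ε)*(2*a)) := by rw [heq]
      _ ≤ volume (E ∩ Set.Ioo (l-a) (l+a)) := key a hapos haδ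
      _ ≤ _ := hmeas
  have hfin := (ENNReal.add_le_add_iff_right ENNReal.ofReal_ne_top).mp hsum
  have hgoal : (1/3:ℝ) * ((l + a) - (l + b)) = (1/3)*(a-b) := by ring
  simpa [Nat.add_sub_cancel, add_sub_cancel_left, ← hadef, ← hbdef, hgoal] using hfin
end

section
/- Let C₁, C₂ be positive real numbers and M₀, M₁, M₂ be nonnegative real numbers. Assume there exists C₃ > 0 such that M₀ ≤ C₃·M₁, and there exists δ₀ > 0 such that M₀ ≤ e^{−C₁δ}·M₁ + e^{C₂δ}·M₂ for every δ ≥ δ₀. Then there exists a constant C₀ > 0 (depending only on C₁, C₂, C₃ and δ₀) such that M₀ ≤ C₀·M₁^{C₂/(C₁+C₂)}·M₂^{C₁/(C₁+C₂)}. -/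
theorem stmt_2 (C₁ C₂ : ℝ) (hC₁ : 0 < C₁) (hC₂ : 0 < C₂)
    (C₃ : ℝ) (hC₃ : 0 < C₃) (δ₀ : ℝ) (hδ₀ : 0 < δ₀) :
    ∃ C₀ : ℝ, 0 < C₀ ∧
      ∀ M₀ M₁ M₂ : ℝ, 0 ≤ M₀ → 0 ≤ M₁ → 0 ≤ M₂ →
        M₀ ≤ C₃ * M₁ →
        (∀ δ : ℝ, δ₀ ≤ δ → M₀ ≤ Real.exp (-C₁ * δ) * M₁ + Real.exp (C₂ * δ) * M₂) →
        M₀ ≤ C₀ * M₁ ^ (C₂ / (C₁ + C₂)) * M₂ ^ (C₁ / (C₁ + C₂)) := by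
  have hs : 0 < C₁ + C₂ := by linarith
  set θ := C₂ / (C₁ + C₂) with hθdef
  set τ := C₁ / (C₁ + C₂) with hτdef
  have hθ : 0 < θ := div_pos hC₂ hs
  have hτ : 0 < τ := div_pos hC₁ hs
  have hθτ : θ + τ = 1 := by rw [hθdef, hτdef]; field_simp; ring
  refine ⟨2 + C₃ * Real.exp (C₁ * δ₀), by positivity, ?_⟩
  intro M₀ M₁ M₂ h0 h1 h2 h3 h4
  rcases h1.eq_or_lt with h1' | h1'
  · have hM0 : M₀ ≤ 0 := by rw [← h1'] at h3; linarith
    have hz : (0:ℝ) ^ θ = 0 := Real.zero_rpow hθ.ne'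
    rw [← h1', hz, mul_zero, zero_mul]
    exact hM0
  rcases h2.eq_or_lt with h2' | h2'
  · -- M₂ = 0 : then M₀ = 0
    have hM0 : M₀ = 0 := by
      by_contra h
      have h0' : 0 < M₀ := lt_of_le_of_ne h0 (Ne.symm h)
      set δ := max δ₀ ((Real.log (M₁ / M₀) + 1) / C₁) with hδ
      have hkey := h4 δ (le_max_left _ _)
      rw [← h2', mul_zero, add_zero] at hkey
      have hδge2 : (Real.log (M₁ / M₀) + 1) / C₁ ≤ δ := le_max_right _ _
      have hC₁δ : Real.log (M₁ / M₀) + 1 ≤ C₁ * δ := by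
        rw [div_le_iff₀ hC₁] at hδge2; linarith
      have hexp : Real.exp (-C₁ * δ) ≤ Real.exp (-(Real.log (M₁ / M₀) + 1)) :=
        Real.exp_le_exp.mpr (by linarith)
      have hlog : Real.exp (Real.log (M₁ / M₀)) = M₁ / M₀ := Real.exp_log (div_pos h1' h0')
      have hlt : Real.exp (-(Real.log (M₁ / M₀) + 1)) * M₁ < M₀ := by
        rw [neg_add, Real.exp_add, Real.exp_neg, hlog, inv_div]
        have hinv : Real.exp (-1 : ℝ) < 1 := by
          rw [Real.exp_lt_one_iff]; norm_num
        calc (M₀ / M₁) * Real.exp (-1:ℝ) * M₁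
            = M₀ * Real.exp (-1:ℝ) := by field_simp
          _ < M₀ * 1 := mul_lt_mul_of_pos_left hinv h0'
          _ = M₀ := mul_one _
      have : Real.exp (-C₁ * δ) * M₁ < M₀ :=
        lt_of_le_of_lt (mul_le_mul_of_nonneg_right hexp h1) hlt
      linarith
    rw [hM0, ← h2', Real.zero_rpow hτ.ne', mul_zero]
  -- both positive
  have hsplit : M₁ ^ θ * M₁ ^ τ = M₁ := by
    rw [← Real.rpow_add h1', hθτ, Real.rpow_one]
  have hsplit2 : M₂ ^ θ * M₂ ^ τ = M₂ := by
    rw [← Real.rpow_add h2', hθτ, Real.rpow_one]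
  set δ₁ := Real.log (M₁ / M₂) / (C₁ + C₂) with hδ₁
  have hlogd : Real.log (M₁ / M₂) = Real.log M₁ - Real.log M₂ := Real.log_div h1'.ne' h2'.ne'
  rcases le_or_gt δ₀ δ₁ with hcase | hcase
  · have hkey := h4 δ₁ hcase
    have e1 : Real.exp (-C₁ * δ₁) * M₁ = M₁ ^ θ * M₂ ^ τ := by
      have h : Real.exp (-C₁ * δ₁) = M₁ ^ (-τ) * M₂ ^ τ := by
        rw [Real.rpow_def_of_pos h1', Real.rpow_def_of_pos h2', ← Real.exp_add]
        congr 1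
        rw [hδ₁, hlogd, hτdef]
        field_simp
        ring
      have hm : M₁ ^ (-τ) * M₁ = M₁ ^ θ := by
        have h' := Real.rpow_add h1' (-τ) 1
        rw [Real.rpow_one] at h'
        rw [← h']; congr 1; linarith
      rw [h, show M₁ ^ (-τ) * M₂ ^ τ * M₁ = M₁ ^ (-τ) * M₁ * M₂ ^ τ from by ring, hm]
    have e2 : Real.exp (C₂ * δ₁) * M₂ = M₁ ^ θ * M₂ ^ τ := by
      have h : Real.exp (C₂ * δ₁) = M₁ ^ θ * M₂ ^ (-θ) := by
        rw [Real.rpow_def_of_pos h1', Real.rpow_def_of_pos h2', ← Real.exp_add]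
        congr 1
        rw [hδ₁, hlogd, hθdef]
        field_simp
        ring
      have hm : M₂ ^ (-θ) * M₂ = M₂ ^ τ := by
        have h' := Real.rpow_add h2' (-θ) 1
        rw [Real.rpow_one] at h'
        rw [← h']; congr 1; linarith
      rw [h, mul_assoc, hm]
    rw [e1, e2] at hkey
    have hP : 0 < M₁ ^ θ * M₂ ^ τ := by positivity
    have hE : 0 ≤ C₃ * Real.exp (C₁ * δ₀) := by positivity
    nlinarith [mul_nonneg hE hP.le]
  · -- δ₁ < δ₀ : use trivial bound
    have hlt : M₁ ≤ Real.exp ((C₁ + C₂) * δ₀) * M₂ := by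
      have : Real.log (M₁ / M₂) < (C₁ + C₂) * δ₀ := by
        rw [hδ₁, div_lt_iff₀ hs] at hcase; linarith
      have h' : M₁ / M₂ < Real.exp ((C₁ + C₂) * δ₀) := by
        have := Real.exp_lt_exp.mpr this
        rwa [Real.exp_log (div_pos h1' h2')] at this
      rw [div_lt_iff₀ h2'] at h'
      linarith
    have hpow : M₁ ^ τ ≤ (Real.exp ((C₁ + C₂) * δ₀) * M₂) ^ τ :=
      Real.rpow_le_rpow h1 hlt hτ.le
    have hexpand : (Real.exp ((C₁ + C₂) * δ₀) * M₂) ^ τ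
        = Real.exp (C₁ * δ₀) * M₂ ^ τ := by
      rw [Real.mul_rpow (Real.exp_pos _).le h2,
        Real.rpow_def_of_pos (Real.exp_pos _), Real.log_exp]
      congr 2
      rw [hτdef]
      field_simp
    rw [hexpand] at hpow
    have hM1θ : 0 ≤ M₁ ^ θ := (Real.rpow_pos_of_pos h1' θ).le
    have hchain : M₀ ≤ C₃ * (M₁ ^ θ * (Real.exp (C₁ * δ₀) * M₂ ^ τ)) := by
      calc M₀ ≤ C₃ * M₁ := h3
        _ = C₃ * (M₁ ^ θ * M₁ ^ τ) := by rw [hsplit]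
        _ ≤ C₃ * (M₁ ^ θ * (Real.exp (C₁ * δ₀) * M₂ ^ τ)) := by
            apply mul_le_mul_of_nonneg_left _ hC₃.le
            exact mul_le_mul_of_nonneg_left hpow hM1θ
    have hP : 0 < M₁ ^ θ * M₂ ^ τ := by positivity
    nlinarith [hP.le]
end

section
/- Let T > 0, let E ⊂ (0,T) be a measurable set of positive Lebesgue measure, let g : (0,T) → [0, +∞) be a measurable function, and let N : (0,T] → [0, +∞) be a nonincreasing function. Assume there is a constant C > 0 such that for almost every t ∈ E and for every s with 0 < s < t one has N(t) ≤ ( C·e^{C/(t−s)}·g(t) )^{1/2} · N(s)^{1/2}. Then there exists a constant C' > 0, depending only on C, E and T, such that N(T) ≤ C' · ∫_E g(t) dt. -/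
/-!
Split `E` by the levels of its distribution function `y ↦ |E ∩ (-∞, y]|` into consecutive bands
of measure `≍ |E| / k²`, all lying beyond `|E| / 2`. In every other band pick a point `t_k` where
the interpolation inequality holds and `g` is at most its average, so `g(t_k) ≲ k² ∫_E g / |E|`,
while the skipped band in between forces `t_k - t_{k+1} ≳ |E| / k²`. Iterating the interpolation
inequality along `t_0 > t_1 > ⋯` and taking logarithms gives, with `α = C + 24 (C + 1) / |E|`,
`log N(t_0) ≤ Σ_{k<K} 2^{-(k+1)} (log ∫_E g + α (k+1)²) + 2^{-K} log N(t_K)`,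
and `N(t_K) ≤ N(|E| / 2)` makes the last term vanish as `K → ∞`. Since
`Σ (k+1)² / 2^{k+1} = 6`, this gives `N(T) ≤ N(t_0) ≤ e^{6α} ∫_E g`.
-/

open MeasureTheory Set Filter Real Topology
open scoped ENNReal

theorem sum_range_succ_sq_div_two_pow_le_six (K : ℕ) :
    ∑ k ∈ Finset.range K, ((k : ℝ) + 1) ^ 2 / 2 ^ (k + 1) ≤ 6 := by
  have closed_form : ∀ K : ℕ, ∑ k ∈ Finset.range K, ((k : ℝ) + 1) ^ 2 / 2 ^ (k + 1)
      = 6 - ((K : ℝ) ^ 2 + 4 * K + 6) / 2 ^ K := by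
    intro K
    induction K with
    | zero => norm_num
    | succ K ih =>
      rw [Finset.sum_range_succ, ih, pow_succ]
      push_cast
      field_simp
      ring
  rw [closed_form, sub_le_self_iff]
  positivity

theorem le_of_forall_le_add_succ_div_two {L β : ℕ → ℝ} {B M : ℝ}
    (hrec : ∀ k, L k ≤ (β k + L (k + 1)) / 2)
    (hβ : ∀ K, ∑ k ∈ Finset.range K, β k / 2 ^ (k + 1) ≤ B) (hL : ∀ k, L k ≤ M) : L 0 ≤ B := by
  have telescope : ∀ K, L 0 ≤ ∑ k ∈ Finset.range K, β k / 2 ^ (k + 1) + L K / 2 ^ K := by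
    intro K
    induction K with
    | zero => simp
    | succ K ih =>
      calc L 0 ≤ ∑ k ∈ Finset.range K, β k / 2 ^ (k + 1) + L K / 2 ^ K := ih
        _ ≤ ∑ k ∈ Finset.range K, β k / 2 ^ (k + 1) + (β K + L (K + 1)) / 2 / 2 ^ K := by
          gcongr; exact hrec K
        _ = _ := by rw [Finset.sum_range_succ, pow_succ]; ring
  have hlim : Tendsto (fun K : ℕ => B + M / 2 ^ K) atTop (𝓝 B) := by
    simpa [div_eq_mul_inv] using tendsto_const_nhds.add
      ((tendsto_pow_atTop_nhds_zero_of_lt_one (by norm_num : (0 : ℝ) ≤ 1 / 2)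
        (by norm_num)).const_mul M)
  refine ge_of_tendsto' hlim fun K => (telescope K).trans ?_
  gcongr
  exacts [hβ K, hL K]

theorem le_exp_mul_of_le_rpow_mul_rpow {n a : ℕ → ℝ} {I α M : ℝ} (hα : 0 ≤ α)
    (hn : ∀ k, 0 < n k) (ha : ∀ k, 0 ≤ a k)
    (hrec : ∀ k, n k ≤ a k ^ (1 / 2 : ℝ) * n (k + 1) ^ (1 / 2 : ℝ))
    (haI : ∀ k, a k ≤ I * exp (α * (k + 1) ^ 2)) (hM : ∀ k, n k ≤ M) :
    n 0 ≤ exp (6 * α) * I := by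
  have ha_pos (k : ℕ) : 0 < a k := by
    refine (ha k).lt_of_ne' fun h0 => ?_
    have := hrec k
    rw [h0, zero_rpow (by norm_num), zero_mul] at this
    exact (hn k).not_ge this
  have hI : 0 < I := pos_of_mul_pos_left ((ha_pos 0).trans_le (haI 0)) (exp_pos _).le
  have hlog_rec (k : ℕ) : log (n k) ≤ (log (a k) + log (n (k + 1))) / 2 := by
    have := log_le_log (hn k) (hrec k)
    rw [log_mul (rpow_pos_of_pos (ha_pos k) _).ne' (rpow_pos_of_pos (hn (k + 1)) _).ne',
      log_rpow (ha_pos k), log_rpow (hn (k + 1))] at this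
    linarith
  have hlog_a (k : ℕ) : log (a k) ≤ log I + α * (k + 1) ^ 2 := by
    simpa [log_mul hI.ne' (exp_pos _).ne'] using log_le_log (ha_pos k) (haI k)
  have hlog_n0 : log (n 0) - log I ≤ 6 * α := by
    refine le_of_forall_le_add_succ_div_two (L := fun k => log (n k) - log I)
      (β := fun k => α * (k + 1) ^ 2) (M := log M - log I) (fun k => ?_) (fun K => ?_) (fun k => ?_)
    · linarith [hlog_rec k, hlog_a k]
    · simp_rw [mul_div_assoc, ← Finset.mul_sum]
      nlinarith [sum_range_succ_sq_div_two_pow_le_six K]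
    · linarith [log_le_log (hn k) (hM k)]
  calc n 0 = exp (log (n 0)) := (exp_log (hn 0)).symm
    _ ≤ exp (6 * α + log I) := by gcongr; linarith
    _ = exp (6 * α) * I := by rw [exp_add, exp_log hI]

theorem mul_exp_div_mul_le {C m d g I q : ℝ} (hC : 0 ≤ C) (hm : 0 < m) (hq : 1 ≤ q)
    (hd : m / (24 * q) ≤ d) (hg0 : 0 ≤ g) (hg : g ≤ I * (24 * q / m)) :
    C * exp (C / d) * g ≤ I * exp ((C + 24 * (C + 1) / m) * q) := by
  have hI : 0 ≤ I := nonneg_of_mul_nonneg_left (hg0.trans hg) (by positivity)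
  have hC_le : C ≤ exp (C * q) :=
    (le_mul_of_one_le_right hC hq).trans (by linarith [add_one_le_exp (C * q)])
  have hCd : C / d ≤ 24 * C * q / m := by
    calc C / d ≤ C / (m / (24 * q)) := div_le_div_of_nonneg_left hC (by positivity) hd
      _ = 24 * C * q / m := by field_simp
  have hg_le : g ≤ I * exp (24 * q / m) :=
    hg.trans (mul_le_mul_of_nonneg_left (by linarith [add_one_le_exp (24 * q / m)]) hI)
  calc C * exp (C / d) * g ≤ exp (C * q) * exp (24 * C * q / m) * (I * exp (24 * q / m)) := by
        gcongr
    _ = I * exp ((C + 24 * (C + 1) / m) * q) := by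
        rw [show (C + 24 * (C + 1) / m) * q = C * q + 24 * C * q / m + 24 * q / m by ring,
          exp_add, exp_add]
        ring

section DistributionFunction

variable {μ : Measure ℝ}

theorem measureReal_Iic_sub_measureReal_Iic [IsFiniteMeasure μ] {a b : ℝ} (hab : a ≤ b) :
    μ.real (Iic b) - μ.real (Iic a) = μ.real (Ioc a b) := by
  rw [← Iic_sdiff_Iic, measureReal_sdiff (Iic_subset_Iic.2 hab) measurableSet_Iic]

theorem measureReal_Ioc_le (hμ : μ ≤ volume) {a b : ℝ} (hab : a ≤ b) :
    μ.real (Ioc a b) ≤ b - a := by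
  rw [← Real.volume_real_Ioc_of_le hab]
  exact ENNReal.toReal_mono measure_Ioc_lt_top.ne (hμ _)

theorem lipschitzWith_measureReal_Iic [IsFiniteMeasure μ] (hμ : μ ≤ volume) :
    LipschitzWith 1 fun x => μ.real (Iic x) := by
  refine LipschitzWith.of_le_add fun x y => ?_
  rcases le_total x y with hxy | hyx
  · linarith [measureReal_mono (μ := μ) (Iic_subset_Iic.2 hxy), dist_nonneg (x := x) (y := y)]
  · rw [Real.dist_eq, abs_of_nonneg (sub_nonneg.2 hyx)]
    linarith [measureReal_Iic_sub_measureReal_Iic (μ := μ) hyx, measureReal_Ioc_le hμ hyx]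

theorem exists_strictAnti_measureReal_Ioc_eq [IsFiniteMeasure μ] (hμ : μ ≤ volume)
    (h0 : μ (Iic 0) = 0) (hpos : 0 < μ.real univ) :
    ∃ x : ℕ → ℝ, StrictAnti x ∧ (∀ j, μ.real univ / 2 < x j) ∧
      ∀ j : ℕ, μ.real (Ioc (x (j + 1)) (x j)) = μ.real univ / (2 * (j + 2) * (j + 3)) := by
  set m := μ.real univ
  set F : ℝ → ℝ := fun y => μ.real (Iic y) with hF_def
  have hF_mono : Monotone F := fun a b hab => measureReal_mono (Iic_subset_Iic.2 hab)
  have hF0 : F 0 = 0 := by simp [hF_def, measureReal_def, h0]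
  have hF_lim : Tendsto F atTop (𝓝 m) :=
    (ENNReal.tendsto_toReal (measure_ne_top μ univ)).comp (tendsto_measure_Iic_atTop μ)
  set v : ℕ → ℝ := fun j => m / 2 + m / (2 * (j + 2))
  have hv_anti : StrictAnti v := fun i j hij => by
    have : (i : ℝ) < j := by exact_mod_cast hij
    simp only [v]
    gcongr
  have hv_pos (j : ℕ) : 0 < v j := by positivity
  have hv_lt (j : ℕ) : v j < m := by
    have : m / (2 * (j + 2)) < m / 2 :=
      div_lt_div_of_pos_left hpos two_pos (by linarith [(j.cast_nonneg : (0 : ℝ) ≤ j)])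
    simp only [v]
    linarith
  have hv_range (j : ℕ) : v j ∈ range F :=
    mem_range_of_exists_le_of_exists_ge (lipschitzWith_measureReal_Iic hμ).continuous
      ⟨0, hF0.trans_le (hv_pos j).le⟩ ((hF_lim.eventually_const_lt (hv_lt j)).exists.imp
        fun _ => le_of_lt)
  choose x hx using hv_range
  have hx_anti : StrictAnti x := fun i j hij =>
    hF_mono.reflect_lt (by rw [hx, hx]; exact hv_anti hij)
  refine ⟨x, hx_anti, fun j => ?_, fun j => ?_⟩
  · have hx_pos : 0 < x j := hF_mono.reflect_lt (by rw [hx, hF0]; exact hv_pos j)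
    have := measureReal_Iic_sub_measureReal_Iic (μ := μ) hx_pos.le
    have hvj : m / 2 < v j := by
      simp only [v]
      linarith [show 0 < m / (2 * ((j : ℝ) + 2)) by positivity]
    linarith [measureReal_Ioc_le hμ hx_pos.le, hx j, hF0]
  · rw [← measureReal_Iic_sub_measureReal_Iic (hx_anti (Nat.lt_succ_self j)).le]
    change F (x j) - F (x (j + 1)) = _
    rw [hx, hx]
    simp only [v]
    push_cast
    field_simp
    ring

end DistributionFunction

theorem exists_mem_le_lintegral_div {α : Type*} [MeasurableSpace α] {μ : Measure α} {f : α → ℝ}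
    {P : α → Prop} {B : Set α} (hB : MeasurableSet B) (hB0 : μ B ≠ 0) (hB_fin : μ B ≠ ∞)
    (hf : AEMeasurable f μ) (hf_int : ∫⁻ x, ENNReal.ofReal (f x) ∂μ ≠ ∞) (hP : ∀ᵐ x ∂μ, P x) :
    ∃ x ∈ B, P x ∧ f x ≤ (∫⁻ x, ENNReal.ofReal (f x) ∂μ).toReal / μ.real B := by
  have : IsFiniteMeasure (μ.restrict B) := isFiniteMeasure_restrict.2 hB_fin
  have hN : μ.restrict B {x | ¬(x ∈ B ∧ P x)} = 0 :=
    ae_iff.1 ((ae_restrict_mem hB).and (ae_restrict_of_ae hP))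
  obtain ⟨x, hxN, hx⟩ := exists_notMem_null_le_laverage (by simpa using hB0)
    hf.ennreal_ofReal.restrict hN
  rw [laverage_eq, Measure.restrict_apply_univ] at hx
  have hx' := hx.trans (ENNReal.div_le_div_right (setLIntegral_le_lintegral B _) _)
  rw [ENNReal.ofReal_le_iff_le_toReal (ENNReal.div_ne_top hf_int hB0), ENNReal.toReal_div] at hx'
  exact ⟨x, (not_not.1 hxN).1, (not_not.1 hxN).2, hx'⟩

theorem exists_seq_separated_le_lintegral {μ : Measure ℝ} [IsFiniteMeasure μ] (hμ : μ ≤ volume)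
    (h0 : μ (Iic 0) = 0) (hpos : 0 < μ.real univ) {f : ℝ → ℝ} (hf : AEMeasurable f μ)
    (hf_int : ∫⁻ x, ENNReal.ofReal (f x) ∂μ ≠ ∞) {P : ℝ → Prop} (hP : ∀ᵐ x ∂μ, P x) :
    ∃ t : ℕ → ℝ, ∀ k : ℕ, P (t k) ∧ μ.real univ / 2 < t k ∧
      μ.real univ / (24 * (k + 1) ^ 2) ≤ t k - t (k + 1) ∧
      f (t k) ≤ (∫⁻ x, ENNReal.ofReal (f x) ∂μ).toReal * (24 * (k + 1) ^ 2 / μ.real univ) := by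
  set m := μ.real univ
  obtain ⟨x, hx_anti, hx_gt, hx_band⟩ := exists_strictAnti_measureReal_Ioc_eq hμ h0 hpos
  have hband_ne (j : ℕ) : μ (Ioc (x (j + 1)) (x j)) ≠ 0 := fun h => by
    have := hx_band j
    rw [measureReal_def, h, ENNReal.toReal_zero] at this
    exact (show 0 < m / (2 * ((j : ℝ) + 2) * (j + 3)) by positivity).ne this
  choose t ht_band ht_P ht_le using fun k : ℕ => exists_mem_le_lintegral_div measurableSet_Ioc
    (hband_ne (2 * k)) (measure_ne_top _ _) hf hf_int hP
  refine ⟨t, fun k => ⟨ht_P k, (hx_gt _).trans (ht_band k).1, ?_, ?_⟩⟩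
  · have hk : (0 : ℝ) ≤ k := k.cast_nonneg
    have ht_succ := (ht_band (k + 1)).2
    rw [show 2 * (k + 1) = 2 * k + 1 + 1 by ring] at ht_succ
    calc m / (24 * (k + 1) ^ 2)
          ≤ m / (2 * (((2 * k + 1 : ℕ) : ℝ) + 2) * ((2 * k + 1 : ℕ) + 3)) :=
          div_le_div_of_nonneg_left hpos.le (by positivity) (by push_cast; nlinarith)
      _ = μ.real (Ioc (x (2 * k + 1 + 1)) (x (2 * k + 1))) := (hx_band _).symm
      _ ≤ x (2 * k + 1) - x (2 * k + 1 + 1) := measureReal_Ioc_le hμ (hx_anti.antitone (by omega))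
      _ ≤ t k - t (k + 1) := by linarith [(ht_band k).1]
  · have hk : (0 : ℝ) ≤ k := k.cast_nonneg
    refine (ht_le k).trans ?_
    rw [hx_band, div_div_eq_mul_div, mul_div_assoc]
    exact mul_le_mul_of_nonneg_left
      (div_le_div_of_nonneg_right (by push_cast; nlinarith) hpos.le) ENNReal.toReal_nonneg

theorem stmt_9_general (T : ℝ) (E : Set ℝ) (hE : MeasurableSet E)
    (hEsub : E ⊆ Set.Ioo 0 T) (hEpos : 0 < volume E)
    (C : ℝ) (hC : 0 < C) :
    ∃ C' : ℝ, 0 < C' ∧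
      ∀ g : ℝ → ℝ, Measurable g → (∀ t ∈ Set.Ioo 0 T, 0 ≤ g t) →
        ∀ Nf : ℝ → ℝ, (∀ t ∈ Set.Ioc 0 T, 0 ≤ Nf t) →
          (∀ s ∈ Set.Ioc 0 T, ∀ t ∈ Set.Ioc 0 T, s ≤ t → Nf t ≤ Nf s) →
          (∀ᵐ t ∂(volume.restrict E), ∀ s : ℝ, 0 < s → s < t →
              Nf t ≤ (C * Real.exp (C / (t - s)) * g t) ^ (1 / 2 : ℝ) * (Nf s) ^ (1 / 2 : ℝ)) →
          ENNReal.ofReal (Nf T) ≤ ENNReal.ofReal C' * ∫⁻ t in E, ENNReal.ofReal (g t) := by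
  have hE_fin : volume E ≠ ∞ := measure_ne_top_of_subset hEsub measure_Ioo_lt_top.ne
  have : IsFiniteMeasure (volume.restrict E) := isFiniteMeasure_restrict.2 hE_fin
  have h0 : volume.restrict E (Iic 0) = 0 := by
    rw [Measure.restrict_apply measurableSet_Iic,
      ((Iic_disjoint_Ioi le_rfl).mono_right (hEsub.trans Ioo_subset_Ioi_self)).inter_eq,
      measure_empty]
  have hm : 0 < (volume.restrict E).real univ := by
    rw [measureReal_restrict_apply_univ]
    exact ENNReal.toReal_pos hEpos.ne' hE_fin
  set m := (volume.restrict E).real univ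
  set α := C + 24 * (C + 1) / m
  refine ⟨exp (6 * α), exp_pos _, fun g hg_meas hg_nonneg N _ hN_anti hinterp => ?_⟩
  set I := ∫⁻ t in E, ENNReal.ofReal (g t)
  rcases eq_or_ne I ∞ with hI | hI
  · simp [hI, exp_pos]
  rcases le_or_gt (N T) 0 with hNT | hNT
  · simp [ENNReal.ofReal_eq_zero.2 hNT]
  obtain ⟨t, ht⟩ := exists_seq_separated_le_lintegral Measure.restrict_le_self h0 hm
    hg_meas.aemeasurable hI ((ae_restrict_mem hE).and hinterp)
  have ht_mem (k : ℕ) : t k ∈ Ioo 0 T := hEsub (ht k).1.1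
  have ht_Ioc (k : ℕ) : t k ∈ Ioc 0 T := Ioo_subset_Ioc_self (ht_mem k)
  have hT_Ioc : T ∈ Ioc 0 T := ⟨(ht_mem 0).1.trans (ht_mem 0).2, le_rfl⟩
  have hm_Ioc : m / 2 ∈ Ioc 0 T := ⟨by positivity, ((ht 0).2.1.trans (ht_mem 0).2).le⟩
  have ht_lt (k : ℕ) : t (k + 1) < t k := by
    linarith [(ht k).2.2.1, show 0 < m / (24 * ((k : ℝ) + 1) ^ 2) by positivity]
  have hNt0 : N (t 0) ≤ exp (6 * α) * I.toReal :=
    le_exp_mul_of_le_rpow_mul_rpow (n := fun k => N (t k))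
      (a := fun k => C * exp (C / (t k - t (k + 1))) * g (t k)) (M := N (m / 2)) (by positivity)
      (fun k => hNT.trans_le (hN_anti _ (ht_Ioc k) _ hT_Ioc (ht_Ioc k).2))
      (fun k => mul_nonneg (by positivity) (hg_nonneg _ (ht_mem k)))
      (fun k => (ht k).1.2 _ (ht_mem (k + 1)).1 (ht_lt k))
      (fun k => mul_exp_div_mul_le hC.le hm (one_le_pow₀ (le_add_of_nonneg_left k.cast_nonneg))
        (ht k).2.2.1 (hg_nonneg _ (ht_mem k)) (ht k).2.2.2)
      (fun k => hN_anti _ hm_Ioc _ (ht_Ioc k) (ht k).2.1.le)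
  calc ENNReal.ofReal (N T) ≤ ENNReal.ofReal (exp (6 * α) * I.toReal) :=
        ENNReal.ofReal_le_ofReal ((hN_anti _ (ht_Ioc 0) _ hT_Ioc (ht_mem 0).2.le).trans hNt0)
    _ = ENNReal.ofReal (exp (6 * α)) * I := by
        rw [ENNReal.ofReal_mul (exp_pos _).le, ENNReal.ofReal_toReal hI]

theorem stmt_9 (T : ℝ) (hT : 0 < T) (E : Set ℝ) (hE : MeasurableSet E)
    (hEsub : E ⊆ Set.Ioo 0 T) (hEpos : 0 < volume E)
    (C : ℝ) (hC : 0 < C) :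
    ∃ C' : ℝ, 0 < C' ∧
      ∀ g : ℝ → ℝ, Measurable g → (∀ t ∈ Set.Ioo 0 T, 0 ≤ g t) →
        ∀ Nf : ℝ → ℝ, (∀ t ∈ Set.Ioc 0 T, 0 ≤ Nf t) →
          (∀ s ∈ Set.Ioc 0 T, ∀ t ∈ Set.Ioc 0 T, s ≤ t → Nf t ≤ Nf s) →
          (∀ᵐ t ∂(volume.restrict E), ∀ s : ℝ, 0 < s → s < t →
              Nf t ≤ (C * Real.exp (C / (t - s)) * g t) ^ (1 / 2 : ℝ) * (Nf s) ^ (1 / 2 : ℝ)) →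
          ENNReal.ofReal (Nf T) ≤ ENNReal.ofReal C' * ∫⁻ t in E, ENNReal.ofReal (g t) :=
  stmt_9_general T E hE hEsub hEpos C hC
end
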